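/- For every a > 0, the function G(k) = πk·coth(πk/a) (extended continuously by G(0) = a) satisfies the transform functional equation: (k₂ G(k₁) + k₁ G(k₂))·G(k₁ + k₂) − (k₁ + k₂)·G(k₁)·G(k₂) = π²·k₁·k₂·(k₁ + k₂) for all real k₁, k₂. -/
import Mathlib


/-- `G(k) = πk·coth(πk/a)`, extended continuously by `G(0) = a`. -/
noncomputable def Gcoth (a k : ℝ) : ℝ :=
  if k = 0 then a
  else Real.pi * k * Real.cosh (Real.pi * k / a) / Real.sinh (Real.pi * k / a)

/-- For every `a > 0`, `G(k) = πk·coth(πk/a)` (with `G(0) = a`) satisfies the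
transform functional equation
`(k₂G(k₁) + k₁G(k₂))·G(k₁+k₂) − (k₁+k₂)·G(k₁)·G(k₂) = π²k₁k₂(k₁+k₂)`. -/
theorem transformEq_coth (a : ℝ) (ha : 0 < a) :
    ∀ k₁ k₂ : ℝ,
      (k₂ * Gcoth a k₁ + k₁ * Gcoth a k₂) * Gcoth a (k₁ + k₂) -
        (k₁ + k₂) * Gcoth a k₁ * Gcoth a k₂ =
      Real.pi ^ 2 * k₁ * k₂ * (k₁ + k₂) := by
  intro k₁ k₂
  have ha' : a ≠ 0 := ha.ne'
  rcases eq_or_ne k₁ 0 with h1 | h1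
  · subst h1; simp [Gcoth]
  rcases eq_or_ne k₂ 0 with h2 | h2
  · subst h2; simp [Gcoth]; split_ifs <;> ring
  rcases eq_or_ne (k₁ + k₂) 0 with h3 | h3
  · have hk2 : k₂ = -k₁ := by linarith
    subst hk2
    have hneg : Real.pi * -k₁ / a = -(Real.pi * k₁ / a) := by ring
    simp only [Gcoth, if_neg h1, if_neg (neg_ne_zero.mpr h1), h3, if_pos rfl]
    rw [hneg, Real.cosh_neg, Real.sinh_neg]
    ring
  · have hs : ∀ k : ℝ, k ≠ 0 → Real.sinh (Real.pi * k / a) ≠ 0 := by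
      intro k hk
      rw [ne_eq, Real.sinh_eq_zero]
      exact div_ne_zero (mul_ne_zero Real.pi_ne_zero hk) ha'
    have hs1 := hs k₁ h1
    have hs2 := hs k₂ h2
    have hs3 := hs (k₁ + k₂) h3
    have hadd : Real.pi * (k₁ + k₂) / a = Real.pi * k₁ / a + Real.pi * k₂ / a := by
      ring
    unfold Gcoth
    rw [if_neg h1, if_neg h2, if_neg h3]
    field_simp
    rw [hadd, Real.sinh_add, Real.cosh_add]
    ring
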